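/- arXiv:1603.05116 — 2 statements merged into one kernel-verified Lean document; each statement's English description precedes it below -/
import Mathlib

section
/- For integers m ≥ 4 and n ≥ 3, let G_{m,n} be the graph obtained by identifying a vertex of degree 1 of the path P_m with a vertex of the complete graph K_n. If u is a vertex of the complete part of G_{m,n} other than the identified vertex, then γ_gr(G_{m,n} - u) = m; if u is the vertex of degree 1, its neighbor on the path, or the identified vertex, then γ_gr(G_{m,n} - u) = m - 1; and if u is any other vertex of the path part, then γ_gr(G_{m,n} - u) = m - 2. -/
/-- The closed neighborhood `N[v] = {v} ∪ N(v)` of a vertex. -/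
def closedNbhd {V : Type*} (G : SimpleGraph V) (v : V) : Set V :=
  insert v (G.neighborSet v)

/-- A sequence (list) of pairwise distinct vertices is legal if each vertex
footprints some vertex not dominated by the previous ones. -/
def IsLegalSeq {V : Type*} (G : SimpleGraph V) (l : List V) : Prop :=
  l.Nodup ∧ ∀ i : Fin l.length, ∃ u,
    u ∈ closedNbhd G (l.get i) ∧
    ∀ j : Fin l.length, (j : ℕ) < (i : ℕ) → u ∉ closedNbhd G (l.get j)

/-- A legal dominating sequence. -/
def IsDomSeq {V : Type*} (G : SimpleGraph V) (l : List V) : Prop :=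
  IsLegalSeq G l ∧ ∀ u : V, ∃ v ∈ l, u ∈ closedNbhd G v

/-- The Grundy domination number: the maximum length of a legal dominating sequence. -/
noncomputable def grundyDomNum {V : Type*} (G : SimpleGraph V) : ℕ :=
  sSup {k : ℕ | ∃ l : List V, IsDomSeq G l ∧ l.length = k}

/-- The graph `G_{m,n}` obtained by identifying an endpoint of the path `P_m`
(on vertices `0, …, m-1`) with a vertex of the complete graph `K_n`
(on vertices `m-1, …, m+n-2`). -/
def pathClique (m n : ℕ) : SimpleGraph (Fin (m + n - 1)) :=
  SimpleGraph.fromRel (fun a b =>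
    a.val + 1 = b.val ∨ (m - 1 ≤ a.val ∧ m - 1 ≤ b.val))

/-!
Deleting `u` from `G_{m,n}` leaves `G_{m,n-1}` when `u` is a clique vertex off the path,
`G_{m-1,n}` when `u` is the end of the path, and otherwise the disjoint union of the path on
`u` vertices, which is `G_{u-1,2}`, and `G_{m-u-1,n}` (with `G_{0,n} = K_{n-1}`). Grundy
domination number is additive over disjoint unions, and `γ_gr(G_{M,N}) = max M 1` for `N ≥ 2`:
the vertices `0, …, M-2` followed by a clique vertex off the path form a legal dominating
sequence, and deleting the leaf `0` costs a legal sequence at most one vertex, so induction on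
`M` reduces the upper bound to a complete graph.
-/

section LegalSeq

variable {V W : Type*} {G : SimpleGraph V} {H : SimpleGraph W}

theorem mem_closedNbhd {u v : V} : u ∈ closedNbhd G v ↔ u = v ∨ G.Adj v u :=
  Set.mem_insert_iff

theorem self_mem_closedNbhd (v : V) : v ∈ closedNbhd G v :=
  Set.mem_insert v _

theorem isLegalSeq_iff {l : List V} :
    IsLegalSeq G l ↔ l.Nodup ∧ ∀ i (hi : i < l.length),
      ∃ u ∈ closedNbhd G l[i], ∀ j (hj : j < i), u ∉ closedNbhd G l[j] := by
  refine and_congr_right fun _ => ⟨fun h i hi => ?_, fun h i => ?_⟩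
  · obtain ⟨u, hu, hfresh⟩ := h ⟨i, hi⟩
    exact ⟨u, hu, fun j hj => hfresh ⟨j, by omega⟩ hj⟩
  · obtain ⟨u, hu, hfresh⟩ := h i i.isLt
    exact ⟨u, hu, fun j hj => hfresh j hj⟩

@[simp]
theorem isLegalSeq_nil : IsLegalSeq G [] :=
  ⟨List.nodup_nil, fun i => i.elim0⟩

theorem isLegalSeq_append_singleton {l : List V} {v : V} :
    IsLegalSeq G (l ++ [v]) ↔
      IsLegalSeq G l ∧ v ∉ l ∧
        ∃ u ∈ closedNbhd G v, ∀ w ∈ l, u ∉ closedNbhd G w := by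
  have get_left {i : ℕ} (hi : i < l.length) : (l ++ [v])[i]'(by simp; omega) = l[i] :=
    List.getElem_append_left hi
  simp only [isLegalSeq_iff, List.nodup_append, List.nodup_singleton, List.mem_singleton,
    List.length_append, List.length_singleton]
  constructor
  · rintro ⟨⟨hnd, -, hne⟩, h⟩
    refine ⟨⟨hnd, fun i hi => ?_⟩, fun hv => hne v hv v rfl rfl, ?_⟩
    · obtain ⟨u, hu, hfresh⟩ := h i (by omega)
      exact ⟨u, get_left hi ▸ hu, fun j hj => get_left (hj.trans hi) ▸ hfresh j hj⟩
    · obtain ⟨u, hu, hfresh⟩ := h l.length (by omega)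
      refine ⟨u, by simpa using hu, fun w hw => ?_⟩
      obtain ⟨j, hj, rfl⟩ := List.getElem_of_mem hw
      exact get_left hj ▸ hfresh j hj
  · rintro ⟨⟨hnd, hlt⟩, hv, u, hu, hfresh⟩
    refine ⟨⟨hnd, trivial, fun a ha b hb hab => hv ?_⟩, fun i hi => ?_⟩
    · rwa [← hb, ← hab]
    rcases Nat.lt_succ_iff_lt_or_eq.1 hi with hi | rfl
    · obtain ⟨u, hu, hfresh⟩ := hlt i hi
      exact ⟨u, (get_left hi).symm ▸ hu,
        fun j hj => (get_left (hj.trans hi)).symm ▸ hfresh j hj⟩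
    · exact ⟨u, by simpa using hu, fun j hj =>
        (get_left hj).symm ▸ hfresh _ (List.getElem_mem hj)⟩

theorem mem_closedNbhd_map (f : G ↪g H) {u v : V} :
    f u ∈ closedNbhd H (f v) ↔ u ∈ closedNbhd G v := by
  simp only [mem_closedNbhd, f.injective.eq_iff, f.map_adj_iff]

theorem IsLegalSeq.map (f : G ↪g H) {l : List V} (hl : IsLegalSeq G l) :
    IsLegalSeq H (l.map f) := by
  induction l using List.reverseRecOn with
  | nil => simp
  | append_singleton l v ih =>
    obtain ⟨hpre, hv, u, hu, hfresh⟩ := isLegalSeq_append_singleton.1 hl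
    rw [List.map_append, List.map_singleton, isLegalSeq_append_singleton]
    refine ⟨ih hpre, by simpa [f.injective.eq_iff] using hv, f u, (mem_closedNbhd_map f).2 hu,
      ?_⟩
    simp only [List.mem_map, forall_exists_index, and_imp, forall_apply_eq_imp_iff₂]
    exact fun w hw => (mem_closedNbhd_map f).not.2 (hfresh w hw)

theorem IsDomSeq.map (e : G ≃g H) {l : List V} (hl : IsDomSeq G l) : IsDomSeq H (l.map e) := by
  refine ⟨hl.1.map e.toEmbedding, fun b => ?_⟩
  obtain ⟨w, hw, hbw⟩ := hl.2 (e.symm b)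
  refine ⟨e w, List.mem_map_of_mem hw, ?_⟩
  simpa using (mem_closedNbhd_map e.toEmbedding).2 hbw

def domSeqLengths (G : SimpleGraph V) : Set ℕ :=
  {k | ∃ l, IsDomSeq G l ∧ l.length = k}

theorem domSeqLengths_congr (e : G ≃g H) : domSeqLengths G = domSeqLengths H := by
  ext k
  constructor
  · rintro ⟨l, hl, rfl⟩
    exact ⟨l.map e, hl.map e, List.length_map _⟩
  · rintro ⟨l, hl, rfl⟩
    exact ⟨l.map e.symm, hl.map e.symm, List.length_map _⟩

theorem grundyDomNum_congr (e : G ≃g H) : grundyDomNum G = grundyDomNum H :=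
  congrArg sSup (domSeqLengths_congr e)

theorem grundyDomNum_eq_of_isGreatest {k : ℕ} (h : IsGreatest (domSeqLengths G) k) :
    grundyDomNum G = k :=
  h.csSup_eq

end LegalSeq

section Sum

variable {V W : Type*} {G : SimpleGraph V} {H : SimpleGraph W}

theorem mem_closedNbhd_inl {x : V ⊕ W} {a : V} :
    x ∈ closedNbhd (G ⊕g H) (Sum.inl a) ↔ ∃ b ∈ closedNbhd G a, x = Sum.inl b := by
  cases x <;> simp [mem_closedNbhd]

theorem mem_closedNbhd_inr {x : V ⊕ W} {a : W} :
    x ∈ closedNbhd (G ⊕g H) (Sum.inr a) ↔ ∃ b ∈ closedNbhd H a, x = Sum.inr b := by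
  cases x <;> simp [mem_closedNbhd]

theorem IsLegalSeq.filterMap_getLeft {L : List (V ⊕ W)} (hL : IsLegalSeq (G ⊕g H) L) :
    IsLegalSeq G (L.filterMap Sum.getLeft?) := by
  induction L using List.reverseRecOn with
  | nil => simp
  | append_singleton L v ih =>
    obtain ⟨hpre, hv, u, hu, hfresh⟩ := isLegalSeq_append_singleton.1 hL
    rcases v with a | a
    · obtain ⟨b, hb, rfl⟩ := mem_closedNbhd_inl.1 hu
      simp only [List.filterMap_append, List.filterMap_cons, Sum.getLeft?_inl,
        List.filterMap_nil, isLegalSeq_append_singleton]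
      refine ⟨ih hpre, by simpa using hv, b, hb, fun w hw => ?_⟩
      have := hfresh (Sum.inl w) (by simpa using hw)
      simpa [mem_closedNbhd_inl] using this
    · simpa [List.filterMap_cons] using ih hpre

theorem IsDomSeq.filterMap_getLeft {L : List (V ⊕ W)} (hL : IsDomSeq (G ⊕g H) L) :
    IsDomSeq G (L.filterMap Sum.getLeft?) := by
  refine ⟨hL.1.filterMap_getLeft, fun a => ?_⟩
  obtain ⟨w | w, hw, haw⟩ := hL.2 (Sum.inl a)
  · exact ⟨w, by simpa using hw, by simpa [mem_closedNbhd_inl] using haw⟩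
  · simp [mem_closedNbhd_inr] at haw

theorem IsDomSeq.filterMap_getRight {L : List (V ⊕ W)} (hL : IsDomSeq (G ⊕g H) L) :
    IsDomSeq H (L.filterMap Sum.getRight?) := by
  simpa [List.filterMap_map, Function.comp_def] using
    (hL.map (SimpleGraph.Iso.sumComm (G := G) (H := H))).filterMap_getLeft

theorem length_eq_length_filterMap_getLeft_add (L : List (V ⊕ W)) :
    L.length = (L.filterMap Sum.getLeft?).length + (L.filterMap Sum.getRight?).length := by
  induction L with
  | nil => rfl
  | cons v L ih =>
    rcases v with a | a <;>
      simp only [List.length_cons, List.filterMap_cons, Sum.getLeft?_inl, Sum.getLeft?_inr,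
        Sum.getRight?_inl, Sum.getRight?_inr, ih] <;> omega

theorem IsLegalSeq.sum {l₁ : List V} {l₂ : List W} (h₁ : IsLegalSeq G l₁)
    (h₂ : IsLegalSeq H l₂) : IsLegalSeq (G ⊕g H) (l₁.map Sum.inl ++ l₂.map Sum.inr) := by
  induction l₂ using List.reverseRecOn with
  | nil =>
    rw [List.map_nil, List.append_nil]
    exact h₁.map .sumInl
  | append_singleton l₂ b ih =>
    obtain ⟨hpre, hb, u, hu, hfresh⟩ := isLegalSeq_append_singleton.1 h₂
    rw [List.map_append, ← List.append_assoc, List.map_singleton, isLegalSeq_append_singleton]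
    refine ⟨ih hpre, by simpa using hb, Sum.inr u, by simpa [mem_closedNbhd_inr] using hu, ?_⟩
    simp only [List.mem_append, List.mem_map]
    rintro _ (⟨a, -, rfl⟩ | ⟨c, hc, rfl⟩)
    · simp [mem_closedNbhd_inl]
    · simpa [mem_closedNbhd_inr] using hfresh c hc

theorem IsDomSeq.sum {l₁ : List V} {l₂ : List W} (h₁ : IsDomSeq G l₁)
    (h₂ : IsDomSeq H l₂) :
    IsDomSeq (G ⊕g H) (l₁.map Sum.inl ++ l₂.map Sum.inr) := by
  refine ⟨h₁.1.sum h₂.1, ?_⟩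
  rintro (a | a)
  · obtain ⟨w, hw, haw⟩ := h₁.2 a
    exact ⟨Sum.inl w, by simpa using hw, by simpa [mem_closedNbhd_inl] using haw⟩
  · obtain ⟨w, hw, haw⟩ := h₂.2 a
    exact ⟨Sum.inr w, by simpa using hw, by simpa [mem_closedNbhd_inr] using haw⟩

theorem IsGreatest.domSeqLengths_sum {a b : ℕ} (ha : IsGreatest (domSeqLengths G) a)
    (hb : IsGreatest (domSeqLengths H) b) : IsGreatest (domSeqLengths (G ⊕g H)) (a + b) := by
  refine ⟨?_, ?_⟩
  · obtain ⟨l₁, h₁, rfl⟩ := ha.1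
    obtain ⟨l₂, h₂, rfl⟩ := hb.1
    exact ⟨_, h₁.sum h₂, by simp⟩
  · rintro _ ⟨L, hL, rfl⟩
    rw [length_eq_length_filterMap_getLeft_add L]
    exact add_le_add (ha.2 ⟨_, hL.filterMap_getLeft, rfl⟩)
      (hb.2 ⟨_, hL.filterMap_getRight, rfl⟩)

end Sum

section Leaf

variable {V : Type*} {G : SimpleGraph V}

theorem mem_closedNbhd_induce {s : Set V} {u v : s} :
    u ∈ closedNbhd (G.induce s) v ↔ (u : V) ∈ closedNbhd G v :=
  (mem_closedNbhd_map (SimpleGraph.Embedding.induce s)).symm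

theorem IsLegalSeq.length_le_one_of_eq_top (hG : G = ⊤) {l : List V} (hl : IsLegalSeq G l) :
    l.length ≤ 1 := by
  by_contra! hlen
  obtain ⟨u, -, hfresh⟩ := (isLegalSeq_iff.1 hl).2 1 hlen
  refine hfresh 0 one_pos ?_
  rw [mem_closedNbhd, hG, SimpleGraph.top_adj]
  tauto

theorem IsLegalSeq.append_singleton_induce {s : Set V} {l : List V} {l' : List s}
    (hl' : IsLegalSeq (G.induce s) l') (hsub : ∀ w ∈ l', (w : V) ∈ l) (v u : s)
    (hv : (v : V) ∉ l) (hu : (u : V) ∈ closedNbhd G v)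
    (hfresh : ∀ w ∈ l, (u : V) ∉ closedNbhd G w) :
    IsLegalSeq (G.induce s) (l' ++ [v]) :=
  isLegalSeq_append_singleton.2 ⟨hl', fun h => hv (hsub _ h), u, mem_closedNbhd_induce.2 hu,
    fun w hw => mem_closedNbhd_induce.not.2 (hfresh w (hsub w hw))⟩

/-- Delete the leaf `x` from the sequence if it occurs there, and otherwise its neighbour `y`:
these are the only vertices whose closed neighbourhoods contain `x`, and if `y` footprints `x`
then `x` cannot occur. -/
theorem IsLegalSeq.exists_induce_ne_map_val_eq_erase [DecidableEq V] {x y : V}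
    (hxy : G.neighborSet x = {y}) {l : List V} (hl : IsLegalSeq G l) :
    ∃ l' : List {v | v ≠ x}, IsLegalSeq (G.induce {v | v ≠ x}) l' ∧
      l'.map Subtype.val = l.erase (if x ∈ l then x else y) := by
  have adj_x {z : V} : G.Adj x z ↔ z = y := by
    rw [← SimpleGraph.mem_neighborSet, hxy, Set.mem_singleton_iff]
  have mem_nbhd_x {u : V} (hu : u ∈ closedNbhd G x) : u = x ∨ u = y := by
    rwa [mem_closedNbhd, adj_x] at hu
  have x_mem_nbhd {v : V} (hv : x ∈ closedNbhd G v) : v = x ∨ v = y := by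
    rwa [mem_closedNbhd, G.adj_comm, adj_x, eq_comm] at hv
  induction l using List.reverseRecOn with
  | nil => exact ⟨[], isLegalSeq_nil, rfl⟩
  | append_singleton l v ih =>
    obtain ⟨hpre, hv, u, hu, hfresh⟩ := isLegalSeq_append_singleton.1 hl
    obtain ⟨l', hl', hmap⟩ := ih hpre
    have hsub : ∀ w ∈ l', (w : V) ∈ l := fun w hw =>
      List.erase_subset (hmap ▸ List.mem_map_of_mem hw)
    by_cases hxl : x ∈ l
    · have hvx : v ≠ x := fun h => hv (h ▸ hxl)
      have hux : u ≠ x := fun h => hfresh x hxl (by rw [← h]; exact self_mem_closedNbhd u)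
      refine ⟨_, hl'.append_singleton_induce hsub ⟨v, hvx⟩ ⟨u, hux⟩ hv hu hfresh, ?_⟩
      rw [if_pos (List.mem_append_left _ hxl), List.erase_append_left _ hxl, List.map_append, hmap,
        if_pos hxl]
      rfl
    by_cases hvx : v = x
    · subst v
      have hyl : y ∉ l := fun hyl => by
        rcases mem_nbhd_x hu with rfl | rfl
        · exact hfresh y hyl (mem_closedNbhd.2 (Or.inr (adj_x.2 rfl).symm))
        · exact hfresh u hyl (self_mem_closedNbhd u)
      refine ⟨l', hl', ?_⟩
      rw [hmap, if_neg hxl, if_pos (List.mem_append_right _ (List.mem_singleton_self _)),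
        List.erase_append_right _ hxl, List.erase_of_not_mem hyl]
      simp
    by_cases hvy : v = y
    · subst v
      refine ⟨l', hl', ?_⟩
      rw [hmap, if_neg hxl, if_neg (by simpa [hxl] using Ne.symm hvx), List.erase_append_right _ hv,
        List.erase_of_not_mem hv]
      simp
    have hux : u ≠ x := fun h => (x_mem_nbhd (h ▸ hu)).elim hvx hvy
    refine ⟨_, hl'.append_singleton_induce hsub ⟨v, hvx⟩ ⟨u, hux⟩ hv hu hfresh, ?_⟩
    rw [List.map_append, hmap, if_neg hxl, if_neg (by simpa [hxl] using Ne.symm hvx),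
      List.erase_append]
    split_ifs with hyl
    · rfl
    · simp [List.erase_of_not_mem hyl, hvy]

theorem IsLegalSeq.exists_induce_ne_of_neighborSet_eq {x y : V} (hxy : G.neighborSet x = {y})
    {l : List V} (hl : IsLegalSeq G l) :
    ∃ l' : List {v | v ≠ x}, IsLegalSeq (G.induce {v | v ≠ x}) l' ∧
      l.length ≤ l'.length + 1 := by
  classical
  obtain ⟨l', hl', hmap⟩ := hl.exists_induce_ne_map_val_eq_erase hxy
  refine ⟨l', hl', ?_⟩
  have hlen := congrArg List.length hmap
  rw [List.length_map, List.length_erase] at hlen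
  split_ifs at hlen <;> omega

end Leaf

namespace pathClique

variable {m n : ℕ}

theorem adj_iff {a b : Fin (m + n - 1)} :
    (pathClique m n).Adj a b ↔ a.val ≠ b.val ∧
      (a.val + 1 = b.val ∨ b.val + 1 = a.val ∨ (m - 1 ≤ a.val ∧ m - 1 ≤ b.val)) := by
  simp only [pathClique, SimpleGraph.fromRel_adj, ne_eq, Fin.ext_iff]
  tauto

theorem mem_closedNbhd_iff {a b : Fin (m + n - 1)} :
    a ∈ closedNbhd (pathClique m n) b ↔
      a.val = b.val ∨ a.val + 1 = b.val ∨ b.val + 1 = a.val ∨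
        (m - 1 ≤ a.val ∧ m - 1 ≤ b.val) := by
  rw [mem_closedNbhd, adj_iff, Fin.ext_iff]
  omega

theorem eq_top (hm : m ≤ 1) : pathClique m n = ⊤ := by
  ext a b
  simp only [adj_iff, SimpleGraph.top_adj, ne_eq, Fin.ext_iff]
  omega

theorem neighborSet_eq (hm : 2 ≤ m) (hn : 1 ≤ n) (u : Fin (m + n - 1)) (hu : u.val = 0) :
    (pathClique m n).neighborSet u = {⟨1, by omega⟩} := by
  ext a
  simp only [SimpleGraph.mem_neighborSet, adj_iff, Set.mem_singleton_iff, Fin.ext_iff]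
  omega

def deleteEndIso (hm : 1 ≤ m) (u : Fin (m + n - 1)) (hu : u.val = 0) :
    (pathClique m n).induce {v | v ≠ u} ≃g pathClique (m - 1) n where
  toFun v := ⟨v.1.val - 1, by have := v.1.isLt; have := Fin.val_ne_of_ne v.2; omega⟩
  invFun w := ⟨⟨w.val + 1, by have := w.isLt; omega⟩, by simp [Fin.ext_iff, hu]⟩
  left_inv v := by
    have := Fin.val_ne_of_ne v.2
    ext
    simp only
    omega
  right_inv w := by simp
  map_rel_iff' {a b} := by
    have := Fin.val_ne_of_ne a.2
    have := Fin.val_ne_of_ne b.2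
    simp only [Equiv.coe_fn_mk, SimpleGraph.comap_adj, Function.Embedding.coe_subtype, adj_iff]
    omega

def deleteCliqueIso (u : Fin (m + n - 1)) (hu : m ≤ u.val) :
    (pathClique m n).induce {v | v ≠ u} ≃g pathClique m (n - 1) where
  toFun v := ⟨if v.1.val < u.val then v.1.val else v.1.val - 1, by
    have := v.1.isLt; have := Fin.val_ne_of_ne v.2; split_ifs <;> omega⟩
  invFun w := ⟨⟨if w.val < u.val then w.val else w.val + 1, by
    have := w.isLt; split_ifs <;> omega⟩, Fin.ne_of_val_ne (by dsimp only; split_ifs <;> omega)⟩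
  left_inv v := by
    have := Fin.val_ne_of_ne v.2
    ext
    simp only
    split_ifs <;> omega
  right_inv w := by
    ext
    simp only
    split_ifs <;> omega
  map_rel_iff' {a b} := by
    have := Fin.val_ne_of_ne a.2
    have := Fin.val_ne_of_ne b.2
    simp only [Equiv.coe_fn_mk, SimpleGraph.comap_adj, Function.Embedding.coe_subtype, adj_iff]
    split_ifs <;> omega

def deletePathIso (u : Fin (m + n - 1)) (hu₁ : 1 ≤ u.val) (hu₂ : u.val < m) :
    (pathClique m n).induce {v | v ≠ u} ≃g
      pathClique (u.val - 1) 2 ⊕g pathClique (m - u.val - 1) n :=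
  SimpleGraph.Iso.symm {
    toFun := Sum.elim
      (fun a => ⟨⟨a.val, by have := a.isLt; omega⟩,
        Fin.ne_of_val_ne (by have := a.isLt; dsimp only; omega)⟩)
      (fun b => ⟨⟨b.val + u.val + 1, by have := b.isLt; omega⟩,
        Fin.ne_of_val_ne (by dsimp only; omega)⟩)
    invFun v := if h : v.1.val < u.val then Sum.inl ⟨v.1.val, by omega⟩
      else Sum.inr ⟨v.1.val - u.val - 1, by
        have := v.1.isLt; have := Fin.val_ne_of_ne v.2; omega⟩
    left_inv := by
      rintro (a | b)
      · have := a.isLt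
        simp [show a.val < u.val by omega]
      · dsimp only [Sum.elim_inr]
        rw [dif_neg (by omega)]
        exact congrArg Sum.inr (Fin.ext (by dsimp only; omega))
    right_inv v := by
      have := Fin.val_ne_of_ne v.2
      simp only
      split_ifs
      · simp
      · ext
        simp only [Sum.elim_inr]
        omega
    map_rel_iff' {a b} := by
      rcases a with a | a <;> rcases b with b | b
      all_goals
        have := a.isLt
        have := b.isLt
        simp only [Equiv.coe_fn_mk, Sum.elim_inl, Sum.elim_inr, SimpleGraph.comap_adj,
          Function.Embedding.subtype_apply, SimpleGraph.sum_adj, adj_iff, iff_false]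
        omega }

theorem length_le_of_isLegalSeq (hn : 1 ≤ n) {l : List (Fin (m + n - 1))}
    (hl : IsLegalSeq (pathClique m n) l) : l.length ≤ max m 1 := by
  induction m with
  | zero => exact (hl.length_le_one_of_eq_top (eq_top (by omega))).trans (le_max_right _ _)
  | succ m ih =>
    rcases Nat.eq_zero_or_pos m with rfl | hm
    · exact hl.length_le_one_of_eq_top (eq_top le_rfl)
    obtain ⟨l', hl', hlen⟩ :=
      hl.exists_induce_ne_of_neighborSet_eq (neighborSet_eq (by omega) hn ⟨0, by omega⟩ rfl)
    have := ih (hl'.map (deleteEndIso (by omega) _ rfl).toEmbedding)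
    rw [List.length_map] at this
    omega

theorem exists_isDomSeq (hn : 2 ≤ n) :
    ∃ l, IsDomSeq (pathClique m n) l ∧ l.length = max m 1 := by
  let seq (i : Fin (max m 1)) : Fin (m + n - 1) :=
    ⟨if i.val < m - 1 then i.val else m + n - 2, by split_ifs <;> omega⟩
  refine ⟨List.ofFn seq,
    ⟨isLegalSeq_iff.2 ⟨List.nodup_ofFn.2 fun i j hij => ?_, fun i hi => ?_⟩, fun x => ?_⟩,
    List.length_ofFn⟩
  · have hval := congrArg Fin.val hij
    have := i.isLt
    have := j.isLt
    ext
    simp only [seq] at hval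
    split_ifs at hval <;> omega
  · rw [List.length_ofFn] at hi
    refine ⟨⟨if i < m - 1 then i + 1 else m + n - 2, by split_ifs <;> omega⟩, ?_,
      fun j hj => ?_⟩
    · simp only [List.getElem_ofFn, mem_closedNbhd_iff, seq]
      split_ifs <;> omega
    · simp only [List.getElem_ofFn, mem_closedNbhd_iff, seq]
      split_ifs <;> omega
  · by_cases hx : x.val < m - 1
    · exact ⟨x, List.mem_ofFn.2 ⟨⟨x.val, by omega⟩, Fin.ext (if_pos hx)⟩,
        self_mem_closedNbhd x⟩
    · refine ⟨seq ⟨max m 1 - 1, by omega⟩, List.mem_ofFn.2 ⟨_, rfl⟩, ?_⟩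
      have := x.isLt
      simp only [mem_closedNbhd_iff, seq]
      split_ifs <;> omega

theorem isGreatest_domSeqLengths (hn : 2 ≤ n) :
    IsGreatest (domSeqLengths (pathClique m n)) (max m 1) :=
  ⟨exists_isDomSeq hn, by
    rintro _ ⟨l, hl, rfl⟩
    exact length_le_of_isLegalSeq (by omega) hl.1⟩

theorem grundyDomNum_eq (hn : 2 ≤ n) : grundyDomNum (pathClique m n) = max m 1 :=
  grundyDomNum_eq_of_isGreatest (isGreatest_domSeqLengths hn)

end pathClique

theorem grundy_pathClique_vertex_deletion (m n : ℕ) (hm : 4 ≤ m) (hn : 3 ≤ n) :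
    (∀ u : Fin (m + n - 1), m - 1 < u.val →
      grundyDomNum ((pathClique m n).induce {v | v ≠ u}) = m) ∧
    (∀ u : Fin (m + n - 1), (u.val = 0 ∨ u.val = 1 ∨ u.val = m - 1) →
      grundyDomNum ((pathClique m n).induce {v | v ≠ u}) = m - 1) ∧
    (∀ u : Fin (m + n - 1), 2 ≤ u.val → u.val ≤ m - 2 →
      grundyDomNum ((pathClique m n).induce {v | v ≠ u}) = m - 2) := by
  have cut (u : Fin (m + n - 1)) (hu₁ : 1 ≤ u.val) (hu₂ : u.val < m) :
      grundyDomNum ((pathClique m n).induce {v | v ≠ u}) =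
        max (u.val - 1) 1 + max (m - u.val - 1) 1 :=
    (grundyDomNum_congr (pathClique.deletePathIso u hu₁ hu₂)).trans <|
      grundyDomNum_eq_of_isGreatest <|
        (pathClique.isGreatest_domSeqLengths le_rfl).domSeqLengths_sum
          (pathClique.isGreatest_domSeqLengths (by omega))
  refine ⟨fun u hu => ?_, fun u hu => ?_, fun u hu₁ hu₂ => ?_⟩
  · rw [grundyDomNum_congr (pathClique.deleteCliqueIso u (by omega)),
      pathClique.grundyDomNum_eq (by omega)]
    omega
  · rcases hu with hu | hu | hu
    · rw [grundyDomNum_congr (pathClique.deleteEndIso (by omega) u hu),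
        pathClique.grundyDomNum_eq (by omega)]
      omega
    · rw [cut u (by omega) (by omega)]
      omega
    · rw [cut u (by omega) (by omega)]
      omega
  · rw [cut u (by omega) (by omega)]
    omega
end

section
/- For integers n ≥ 2 and p ≥ 1, the Grundy domination number of the Sierpiński graph S_p^n satisfies the recursive upper bound γ_gr(S_p^n) ≤ p · γ_gr(S_p^{n-1}) + p(p-1)/2. -/
/-- The Sierpiński graph `S_p^n` on vertex set `{0,…,p-1}^n`: two distinct vertices
`u` and `v` are adjacent iff there is a coordinate `h` with `u t = v t` for `t < h`,
`u h ≠ v h`, and `u t = v h`, `v t = u h` for all `t > h`. -/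
def sierpinskiGraph (p n : ℕ) : SimpleGraph (Fin n → Fin p) :=
  SimpleGraph.fromRel (fun u v => ∃ h : Fin n,
    (∀ t : Fin n, t < h → u t = v t) ∧ u h ≠ v h ∧
    (∀ t : Fin n, h < t → u t = v h ∧ v t = u h))

section Footprints

variable {V : Type*} {G : SimpleGraph V}

theorem mem_closedNbhd_self (G : SimpleGraph V) (v : V) : v ∈ closedNbhd G v :=
  Set.mem_insert _ _

theorem mem_closedNbhd_iff {x y : V} : y ∈ closedNbhd G x ↔ y = x ∨ G.Adj x y := Iff.rfl

def IsFootprinting {ι : Type*} [LT ι] (G : SimpleGraph V) (f u : ι → V) : Prop :=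
  ∀ i, u i ∈ closedNbhd G (f i) ∧ ∀ j < i, u i ∉ closedNbhd G (f j)

theorem IsFootprinting.comp_strictMono {ι κ : Type*} [Preorder ι] [Preorder κ] {f u : ι → V}
    (h : IsFootprinting G f u) {e : κ → ι} (he : StrictMono e) :
    IsFootprinting G (f ∘ e) (u ∘ e) :=
  fun i => ⟨(h (e i)).1, fun j hj => (h (e i)).2 (e j) (he hj)⟩

theorem IsFootprinting.injective_sym2Mk {ι : Type*} [LinearOrder ι] {f u : ι → V}
    (h : IsFootprinting G f u) (hf : Function.Injective f) :
    Function.Injective fun i => s(f i, u i) := by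
  intro i j hij
  -- A swap `f i = u j`, `u i = f j` of distinct indices is impossible: the later footprint
  -- would be the earlier vertex itself.
  rcases Sym2.eq_iff.1 hij with ⟨hfij, -⟩ | ⟨hfi, hui⟩
  · exact hf hfij
  · rcases lt_trichotomy i j with hlt | heq | hgt
    · exact absurd (hfi ▸ mem_closedNbhd_self G (f i)) ((h j).2 i hlt)
    · exact heq
    · exact absurd (hui ▸ mem_closedNbhd_self G (f j)) ((h i).2 j hgt)

theorem isLegalSeq_ofFn_iff {k : ℕ} {f : Fin k → V} :
    IsLegalSeq G (List.ofFn f) ↔ Function.Injective f ∧ ∃ u, IsFootprinting G f u := by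
  rw [IsLegalSeq, List.nodup_ofFn]
  refine and_congr_right fun _ => Iff.trans ?_ (Classical.skolem
    (p := fun a w => w ∈ closedNbhd G (f a) ∧ ∀ b < a, w ∉ closedNbhd G (f b)))
  simp only [Fin.forall_iff, List.length_ofFn, List.get_ofFn, Fin.cast_mk, ← Fin.lt_def,
    Fin.mk_lt_mk]

theorem isLegalSeq_iff_s16 {l : List V} :
    IsLegalSeq G l ↔ Function.Injective l.get ∧ ∃ u, IsFootprinting G l.get u := by
  rw [← isLegalSeq_ofFn_iff, List.ofFn_get]

theorem IsLegalSeq.append_singleton {l : List V} {u : V} (hl : IsLegalSeq G l)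
    (hu : ∀ v ∈ l, u ∉ closedNbhd G v) : IsLegalSeq G (l ++ [u]) := by
  obtain ⟨hinj, w, hw⟩ := isLegalSeq_iff_s16.1 hl
  have hsnoc : l ++ [u] = List.ofFn (Fin.snoc l.get u) := by
    rw [List.ofFn_succ_last]
    simp
  rw [hsnoc, isLegalSeq_ofFn_iff, Fin.snoc_injective_iff]
  refine ⟨⟨hinj, ?_⟩, Fin.snoc w u, Fin.lastCases ?_ fun a => ?_⟩
  · rintro ⟨i, hi⟩
    exact hu _ (l.get_mem i) (hi ▸ mem_closedNbhd_self G u)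
  · refine ⟨by simpa using mem_closedNbhd_self G u, Fin.lastCases (by simp) fun b _ => ?_⟩
    simpa using hu _ (l.get_mem b)
  · refine ⟨by simpa using (hw a).1, Fin.lastCases
      (fun h => absurd h (Fin.castSucc_lt_last a).asymm) fun b hb => ?_⟩
    simpa using (hw a).2 b (by simpa using hb)

theorem IsLegalSeq.length_le_grundyDomNum [Fintype V] {l : List V} (hl : IsLegalSeq G l) :
    l.length ≤ grundyDomNum G := by
  set S := {k : ℕ | ∃ l : List V, IsLegalSeq G l ∧ l.length = k}
  have hS : BddAbove S :=
    ⟨Fintype.card V, by rintro _ ⟨l, hl, rfl⟩; exact hl.1.length_le_card⟩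
  obtain ⟨l₀, hl₀, hlen₀⟩ := Nat.sSup_mem (⟨_, l, hl, rfl⟩ : S.Nonempty) hS
  -- A longest legal sequence is dominating: an undominated vertex could be appended to it.
  have hdom : ∀ u, ∃ v ∈ l₀, u ∈ closedNbhd G v := by
    by_contra! ⟨u, hu⟩
    have := le_csSup hS ⟨_, hl₀.append_singleton hu, rfl⟩
    simp only [List.length_append, List.length_singleton] at this
    omega
  calc l.length ≤ sSup S := le_csSup hS ⟨l, hl, rfl⟩
    _ = l₀.length := hlen₀.symm
    _ ≤ grundyDomNum G := by
      unfold grundyDomNum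
      exact le_csSup (hS.mono fun _ ⟨l, hl, hk⟩ => (⟨l, hl.1, hk⟩ : _ ∈ S))
        ⟨l₀, ⟨hl₀, hdom⟩, rfl⟩

theorem card_le_grundyDomNum_of_isFootprinting [Fintype V] {ι : Type*} [Fintype ι]
    [LinearOrder ι] {f u : ι → V} (hf : Function.Injective f) (h : IsFootprinting G f u) :
    Fintype.card ι ≤ grundyDomNum G := by
  set e := Fintype.orderIsoFinOfCardEq ι rfl
  have hl : IsLegalSeq G (List.ofFn (f ∘ e)) :=
    isLegalSeq_ofFn_iff.2 ⟨hf.comp e.injective, _, h.comp_strictMono e.strictMono⟩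
  simpa using hl.length_le_grundyDomNum

end Footprints

section Sierpinski

variable {p m : ℕ}

theorem sierpinskiGraph_adj_cons_cons_iff {c : Fin p} {x y : Fin m → Fin p} :
    (sierpinskiGraph p (m + 1)).Adj (Fin.cons c x) (Fin.cons c y) ↔
      (sierpinskiGraph p m).Adj x y := by
  simp [sierpinskiGraph, Fin.exists_fin_succ, Fin.forall_fin_succ, Fin.succ_lt_succ_iff]

theorem mem_closedNbhd_sierpinskiGraph_succ_iff {x y : Fin (m + 1) → Fin p} (h0 : x 0 = y 0) :
    y ∈ closedNbhd (sierpinskiGraph p (m + 1)) x ↔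
      Fin.tail y ∈ closedNbhd (sierpinskiGraph p m) (Fin.tail x) := by
  induction x using Fin.consCases
  induction y using Fin.consCases
  simp only [Fin.cons_zero] at h0
  subst h0
  simp [mem_closedNbhd_iff, sierpinskiGraph_adj_cons_cons_iff]

theorem sierpinskiGraph_eq_const_of_adj_cons_cons {a b : Fin p} {x y : Fin m → Fin p}
    (hab : a ≠ b) (h : (sierpinskiGraph p (m + 1)).Adj (Fin.cons a x) (Fin.cons b y)) :
    x = (fun _ => b) ∧ y = fun _ => a := by
  simp only [sierpinskiGraph, SimpleGraph.fromRel_adj, Fin.exists_fin_succ, Fin.forall_fin_succ,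
    Fin.succ_lt_succ_iff, Fin.cons_zero, Fin.cons_succ, Fin.succ_pos, Fin.not_lt_zero, hab,
    hab.symm] at h
  simp only [funext_iff]
  grind

theorem sierpinskiGraph_sym2_eq_of_adj {x y x' y' : Fin (m + 1) → Fin p}
    (h : (sierpinskiGraph p (m + 1)).Adj x y) (h' : (sierpinskiGraph p (m + 1)).Adj x' y')
    (h0 : x 0 ≠ y 0) (heq : s(x 0, y 0) = s(x' 0, y' 0)) : s(x, y) = s(x', y') := by
  induction x using Fin.consCases
  induction y using Fin.consCases
  induction x' using Fin.consCases
  induction y' using Fin.consCases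
  simp only [Fin.cons_zero] at h0 heq
  have h0' : _ ≠ _ := fun e => h0 (Sym2.mk_isDiag_iff.1 (heq ▸ Sym2.mk_isDiag_iff.2 e))
  obtain ⟨rfl, rfl⟩ := sierpinskiGraph_eq_const_of_adj_cons_cons h0 h
  obtain ⟨rfl, rfl⟩ := sierpinskiGraph_eq_const_of_adj_cons_cons h0' h'
  rcases Sym2.eq_iff.1 heq with ⟨rfl, rfl⟩ | ⟨rfl, rfl⟩
  · rfl
  · exact Sym2.eq_swap

end Sierpinski

section Counting

open Finset

variable {p m k : ℕ} {f u : Fin k → Fin (m + 1) → Fin p}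

theorem IsFootprinting.card_filter_head_eq_le_grundyDomNum
    (hf : Function.Injective f) (h : IsFootprinting (sierpinskiGraph p (m + 1)) f u) (c : Fin p) :
    #{i | u i 0 = f i 0 ∧ f i 0 = c} ≤ grundyDomNum (sierpinskiGraph p m) := by
  set s : Finset (Fin k) := {i | u i 0 = f i 0 ∧ f i 0 = c}
  have hs : ∀ i ∈ s, u i 0 = f i 0 ∧ f i 0 = c := fun i hi => (mem_filter.1 hi).2
  rw [← Fintype.card_coe]
  refine card_le_grundyDomNum_of_isFootprinting (f := fun i : s => Fin.tail (f i))
    (u := fun i => Fin.tail (u i)) (fun i j hij => Subtype.ext (hf ?_))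
    fun i => ⟨?_, fun j hj => ?_⟩
  · rw [← Fin.cons_self_tail (f i), ← Fin.cons_self_tail (f j), (hs i i.2).2, (hs j j.2).2]
    exact congrArg _ hij
  · exact (mem_closedNbhd_sierpinskiGraph_succ_iff (hs i i.2).1.symm).1 (h i).1
  · have h0 : f j 0 = u i 0 := by rw [(hs i i.2).1, (hs i i.2).2, (hs j j.2).2]
    rw [← mem_closedNbhd_sierpinskiGraph_succ_iff h0]
    exact (h i).2 j hj

theorem IsFootprinting.card_filter_head_ne_le_choose_two
    (hf : Function.Injective f) (h : IsFootprinting (sierpinskiGraph p (m + 1)) f u) :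
    #{i | u i 0 ≠ f i 0} ≤ p.choose 2 := by
  have hadj : ∀ i, u i 0 ≠ f i 0 → (sierpinskiGraph p (m + 1)).Adj (f i) (u i) := fun i hi =>
    ((h i).1).resolve_left fun e => hi (congrFun e 0)
  calc #{i | u i 0 ≠ f i 0} = Fintype.card {i // u i 0 ≠ f i 0} := (Fintype.card_subtype _).symm
    _ ≤ Fintype.card {z : Sym2 (Fin p) // ¬ z.IsDiag} :=
      Fintype.card_le_of_injective (fun i => ⟨s(f i 0, u i 0), by simpa using i.2.symm⟩)
        fun i j hij => Subtype.ext <| h.injective_sym2Mk hf <| sierpinskiGraph_sym2_eq_of_adj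
          (hadj i i.2) (hadj j j.2) i.2.symm (congrArg Subtype.val hij)
    _ = p.choose 2 := by rw [Sym2.card_subtype_not_diag, Fintype.card_fin]

theorem IsLegalSeq.length_le_mul_grundyDomNum_add_choose_two {l : List (Fin (m + 1) → Fin p)}
    (hl : IsLegalSeq (sierpinskiGraph p (m + 1)) l) :
    l.length ≤ p * grundyDomNum (sierpinskiGraph p m) + p.choose 2 := by
  obtain ⟨hf, u, h⟩ := isLegalSeq_iff_s16.1 hl
  have hcopies : #{i | u i 0 = l.get i 0} ≤ p * grundyDomNum (sierpinskiGraph p m) := by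
    rw [card_eq_sum_card_fiberwise (f := fun i => l.get i 0) (t := univ) (by simp)]
    simpa [filter_filter] using
      sum_le_sum fun c (_ : c ∈ univ) => h.card_filter_head_eq_le_grundyDomNum hf c
  calc l.length = #{i | u i 0 = l.get i 0} + #{i | u i 0 ≠ l.get i 0} := by
        rw [card_filter_add_card_filter_not, card_univ, Fintype.card_fin]
    _ ≤ _ := add_le_add hcopies (h.card_filter_head_ne_le_choose_two hf)

end Counting

theorem grundy_sierpinski_recursive_upper_general (p n : ℕ) (hn : 2 ≤ n) :
    grundyDomNum (sierpinskiGraph p n) ≤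
      p * grundyDomNum (sierpinskiGraph p (n - 1)) + p * (p - 1) / 2 := by
  obtain ⟨m, rfl⟩ : ∃ m, n = m + 1 := ⟨n - 1, by omega⟩
  rw [Nat.add_sub_cancel, ← Nat.choose_two_right]
  exact csSup_le' fun _ ⟨l, hl, hlen⟩ => hlen ▸ hl.1.length_le_mul_grundyDomNum_add_choose_two

theorem grundy_sierpinski_recursive_upper (p n : ℕ) (hp : 1 ≤ p) (hn : 2 ≤ n) :
    grundyDomNum (sierpinskiGraph p n) ≤
      p * grundyDomNum (sierpinskiGraph p (n - 1)) + p * (p - 1) / 2 :=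
  grundy_sierpinski_recursive_upper_general p n hn
end
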